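/- arXiv:2411.13573 — 2 statements merged into one kernel-verified Lean document; each statement's English description precedes it below -/
import Mathlib

section
/- Let Ω ⊆ ℝ² be open. Let e_s, h_s : Ω → ℂ² and e_z, h_z : Ω → ℂ be smooth, let μ_zz : Ω → ℂ be smooth and nowhere zero, let μ_s : Ω → M₂(ℂ) be a smooth field of invertible 2×2 matrices, and let ε_cs : Ω → M₂(ℂ) be a matrix field. Let ω, μ₀, ε₀, k_z be complex constants with ω·μ₀ ≠ 0, and set k₀² = ω²·μ₀·ε₀. Suppose on Ω: (i) curl e_s = i·ω·μ₀·μ_zz·h_z; (ii) Curl e_z + i·k_z·J(e_s) = i·ω·μ₀·(μ_s·h_s); (iii) Curl h_z + i·k_z·J(h_s) = −i·ω·ε₀·(ε_cs·e_s). Then on Ω: Curl(μ_zz⁻¹·curl e_s) + i·k_z·ν·(grad e_z) − k₀²·ε_cs·e_s + k_z²·ν·e_s = 0, where ν = J ∘ μ_s⁻¹ ∘ J⁻¹ is the 90°-rotation conjugate of μ_s⁻¹. -/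
noncomputable section

/-- Partial derivative in the first coordinate direction. -/
def pd1 (f : ℝ × ℝ → ℂ) (p : ℝ × ℝ) : ℂ := fderiv ℝ f p (1, 0)

/-- Partial derivative in the second coordinate direction. -/
def pd2 (f : ℝ × ℝ → ℂ) (p : ℝ × ℝ) : ℂ := fderiv ℝ f p (0, 1)

/-- Transverse gradient of a scalar field: grad f = (∂₁ f, ∂₂ f). -/
def tgrad (f : ℝ × ℝ → ℂ) (p : ℝ × ℝ) : ℂ × ℂ := (pd1 f p, pd2 f p)

/-- Vector curl of a scalar field: Curl f = (∂₂ f, −∂₁ f). -/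
def vCurl (f : ℝ × ℝ → ℂ) (p : ℝ × ℝ) : ℂ × ℂ := (pd2 f p, -pd1 f p)

/-- Scalar curl of a vector field: curl u = ∂₁ u₂ − ∂₂ u₁. -/
def sCurl (u : ℝ × ℝ → ℂ × ℂ) (p : ℝ × ℝ) : ℂ :=
  pd1 (fun q => (u q).2) p - pd2 (fun q => (u q).1) p

/-- Divergence of a vector field: div u = ∂₁ u₁ + ∂₂ u₂. -/
def tdiv (u : ℝ × ℝ → ℂ × ℂ) (p : ℝ × ℝ) : ℂ :=
  pd1 (fun q => (u q).1) p + pd2 (fun q => (u q).2) p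

/-- 90° rotation J(v₁, v₂) = (−v₂, v₁), i.e. ẑ × v. -/
def Jrot (v : ℂ × ℂ) : ℂ × ℂ := (-v.2, v.1)

/-- Inverse of the 90° rotation: J⁻¹(v₁, v₂) = (v₂, −v₁). -/
def JrotInv (v : ℂ × ℂ) : ℂ × ℂ := (v.2, -v.1)

/-- Action of a 2×2 complex matrix on a pair. -/
def matVec (A : Matrix (Fin 2) (Fin 2) ℂ) (v : ℂ × ℂ) : ℂ × ℂ :=
  (A 0 0 * v.1 + A 0 1 * v.2, A 1 0 * v.1 + A 1 1 * v.2)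


private lemma matVec_matVec (A B : Matrix (Fin 2) (Fin 2) ℂ) (v : ℂ × ℂ) :
    matVec A (matVec B v) = matVec (A * B) v := by
  simp only [matVec, Matrix.mul_apply, Fin.sum_univ_two, Prod.mk.injEq]
  constructor <;> ring

private lemma matVec_one (v : ℂ × ℂ) : matVec 1 v = v := by
  simp [matVec]

private lemma matVec_smul (A : Matrix (Fin 2) (Fin 2) ℂ) (c : ℂ) (v : ℂ × ℂ) :
    matVec A (c • v) = c • matVec A v := by
  simp only [matVec, Prod.smul_def, smul_eq_mul, Prod.mk.injEq]
  constructor <;> ring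

/-- The vectorial Helmholtz equation (2-9a) follows from the transverse Maxwell
relations (2-8a), (2-8b), (2-8d), with ν = J ∘ μ_s⁻¹ ∘ J⁻¹. -/
theorem stmt_12 (Ω : Set (ℝ × ℝ)) (hΩ : IsOpen Ω)
    (es hs : ℝ × ℝ → ℂ × ℂ) (ez hz : ℝ × ℝ → ℂ)
    (hes : ContDiffOn ℝ (⊤ : ℕ∞) es Ω) (hhs : ContDiffOn ℝ (⊤ : ℕ∞) hs Ω)
    (hez : ContDiffOn ℝ (⊤ : ℕ∞) ez Ω) (hhz : ContDiffOn ℝ (⊤ : ℕ∞) hz Ω)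
    (μzz : ℝ × ℝ → ℂ) (hμzz : ContDiffOn ℝ (⊤ : ℕ∞) μzz Ω) (hμzz0 : ∀ p ∈ Ω, μzz p ≠ 0)
    (μs : ℝ × ℝ → Matrix (Fin 2) (Fin 2) ℂ)
    (hμs : ∀ i j, ContDiffOn ℝ (⊤ : ℕ∞) (fun p => μs p i j) Ω)
    (hμsinv : ∀ p ∈ Ω, IsUnit (μs p).det)
    (εcs : ℝ × ℝ → Matrix (Fin 2) (Fin 2) ℂ)
    (ω μ₀ ε₀ kz : ℂ) (hωμ : ω * μ₀ ≠ 0)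
    (hi : ∀ p ∈ Ω, sCurl es p = Complex.I * ω * μ₀ * μzz p * hz p)
    (hii : ∀ p ∈ Ω, vCurl ez p + (Complex.I * kz) • Jrot (es p)
            = (Complex.I * ω * μ₀) • matVec (μs p) (hs p))
    (hiii : ∀ p ∈ Ω, vCurl hz p + (Complex.I * kz) • Jrot (hs p)
            = (-(Complex.I * ω * ε₀)) • matVec (εcs p) (es p)) :
    ∀ p ∈ Ω,
      vCurl (fun q => (μzz q)⁻¹ * sCurl es q) p
        + (Complex.I * kz) • Jrot (matVec (μs p)⁻¹ (JrotInv (tgrad ez p)))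
        - (ω ^ 2 * μ₀ * ε₀) • matVec (εcs p) (es p)
        + kz ^ 2 • Jrot (matVec (μs p)⁻¹ (JrotInv (es p))) = 0 := by
  intro p hp
  set c := Complex.I * ω * μ₀ with hcdef
  have hd : DifferentiableAt ℝ hz p :=
    ((hhz.contDiffAt (hΩ.mem_nhds hp)).differentiableAt (by simp))
  have heq : (fun q => (μzz q)⁻¹ * sCurl es q) =ᶠ[nhds p] (fun q => c * hz q) := by
    filter_upwards [hΩ.mem_nhds hp] with q hq
    rw [hi q hq]
    field_simp [hμzz0 q hq]
  have hvc : vCurl (fun q => (μzz q)⁻¹ * sCurl es q) p = c • vCurl hz p := by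
    simp only [vCurl, pd1, pd2, heq.fderiv_eq, fderiv_const_mul hd, Prod.smul_def,
      ContinuousLinearMap.smul_apply, smul_eq_mul, Prod.mk.injEq]
    constructor <;> simp
  -- invert the matrix in (ii)
  have hinv : ∀ v, matVec (μs p)⁻¹ (matVec (μs p) v) = v := by
    intro v
    rw [matVec_matVec, Matrix.nonsing_inv_mul _ (hμsinv p hp), matVec_one]
  have h1 : c • hs p
      = matVec (μs p)⁻¹ (vCurl ez p + (Complex.I * kz) • Jrot (es p)) := by
    rw [hii p hp, matVec_smul, hinv]
  rw [hvc]
  have h3 := hiii p hp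
  -- reduce to scalar components
  rw [Prod.ext_iff] at h1 h3 ⊢
  simp only [matVec, Jrot, JrotInv, vCurl, tgrad, Prod.smul_def, smul_eq_mul, Prod.fst_add,
    Prod.snd_add, Prod.fst_zero, Prod.snd_zero, Prod.fst_sub, Prod.snd_sub, neg_mul,
    Prod.fst_neg, Prod.snd_neg] at h1 h3 ⊢
  obtain ⟨h1a, h1b⟩ := h1
  obtain ⟨h3a, h3b⟩ := h3
  constructor
  · linear_combination c * h3a + Complex.I * kz * h1b
      - (ω ^ 2 * μ₀ * ε₀ * (εcs p 0 0 * (es p).1 + εcs p 0 1 * (es p).2)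
        + kz ^ 2 * ((μs p)⁻¹ 1 0 * (es p).2 - (μs p)⁻¹ 1 1 * (es p).1)) * Complex.I_sq
  · linear_combination c * h3b - Complex.I * kz * h1a
      - (ω ^ 2 * μ₀ * ε₀ * (εcs p 1 0 * (es p).1 + εcs p 1 1 * (es p).2)
        - kz ^ 2 * ((μs p)⁻¹ 0 0 * (es p).2 - (μs p)⁻¹ 0 1 * (es p).1)) * Complex.I_sq
end
end

section
/- Let Ω ⊆ ℝ² be open, let e_s : Ω → ℂ² and e_z : Ω → ℂ be smooth, let μ_zz : Ω → ℂ be smooth and nowhere zero, let ν, ε_cs : Ω → M₂(ℂ) be smooth 2×2 complex-matrix-valued fields, let ε_cz : Ω → ℂ be smooth, and let k₀, k_z be complex constants with k₀ ≠ 0. Suppose on Ω the two equations hold: (i) Curl(μ_zz⁻¹·curl e_s) + i·k_z·ν·(grad e_z) − k₀²·ε_cs·e_s + k_z²·ν·e_s = 0, and (ii) div(ν·grad e_z) − i·k_z·div(ν·e_s) + k₀²·ε_cz·e_z = 0. Then Gauss's law holds on Ω: div(ε_cs·e_s) + i·k_z·ε_cz·e_z = 0. In particular, the three equations of the waveguide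 system are linearly dependent: the divergence equation is a consequence of the vectorial and scalar Helmholtz equations. -/
noncomputable section

section Helpers

open Filter Topology

/-- `fun q => fderiv ℝ f q v` is smooth at `p` when `f` is. -/
lemma cdA_pdv {f : ℝ × ℝ → ℂ} {p : ℝ × ℝ} (hf : ContDiffAt ℝ (⊤ : ℕ∞) f p) (v : ℝ × ℝ) :
    ContDiffAt ℝ (⊤ : ℕ∞) (fun q => fderiv ℝ f q v) p :=
  (hf.fderiv_right (by simp)).clm_apply contDiffAt_const

/-- Schwarz: mixed partials commute for smooth functions. -/
lemma schwarz {f : ℝ × ℝ → ℂ} {p : ℝ × ℝ} (hf : ContDiffAt ℝ (⊤ : ℕ∞) f p) :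
    fderiv ℝ (fun q => fderiv ℝ f q (0, 1)) p (1, 0)
      = fderiv ℝ (fun q => fderiv ℝ f q (1, 0)) p (0, 1) := by
  have hsym : IsSymmSndFDerivAt ℝ f p := hf.isSymmSndFDerivAt (by rw [minSmoothness_of_isRCLikeNormedField]; exact WithTop.coe_le_coe.mpr (le_top : (2 : ℕ∞) ≤ ⊤))
  have hd : DifferentiableAt ℝ (fderiv ℝ f) p :=
    (hf.fderiv_right (m := (⊤ : ℕ∞)) (by simp)).differentiableAt (by simp)
  have h1 : fderiv ℝ (fun q => fderiv ℝ f q (0, 1)) p (1, 0)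
      = fderiv ℝ (fderiv ℝ f) p (1, 0) (0, 1) := by
    rw [fderiv_clm_apply hd (differentiableAt_const _)]
    simp
  have h2 : fderiv ℝ (fun q => fderiv ℝ f q (1, 0)) p (0, 1)
      = fderiv ℝ (fderiv ℝ f) p (0, 1) (1, 0) := by
    rw [fderiv_clm_apply hd (differentiableAt_const _)]
    simp
  rw [h1, h2, hsym]

/-- Differentiating a 4-term linear combination that vanishes on an open set. -/
lemma pdv_comb_zero {Ω : Set (ℝ × ℝ)} (hΩ : IsOpen Ω) {p : ℝ × ℝ} (hp : p ∈ Ω)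
    {a b c d : ℝ × ℝ → ℂ} {c1 c2 c3 : ℂ}
    (ha : DifferentiableAt ℝ a p) (hb : DifferentiableAt ℝ b p)
    (hc : DifferentiableAt ℝ c p) (hd : DifferentiableAt ℝ d p)
    (h : ∀ q ∈ Ω, a q + c1 * b q - c2 * c q + c3 * d q = 0) (v : ℝ × ℝ) :
    fderiv ℝ a p v + c1 * fderiv ℝ b p v - c2 * fderiv ℝ c p v
      + c3 * fderiv ℝ d p v = 0 := by
  have hF : HasFDerivAt (fun q => a q + c1 * b q - c2 * c q + c3 * d q)
      (fderiv ℝ a p + c1 • fderiv ℝ b p - c2 • fderiv ℝ c p + c3 • fderiv ℝ d p) p :=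
    ((ha.hasFDerivAt.add ((hb.hasFDerivAt.const_mul c1))).sub
      (hc.hasFDerivAt.const_mul c2)).add (hd.hasFDerivAt.const_mul c3)
  have h0 : (fun q => a q + c1 * b q - c2 * c q + c3 * d q) =ᶠ[nhds p]
      (fun _ => (0 : ℂ)) := by
    filter_upwards [hΩ.mem_nhds hp] with q hq using h q hq
  have hz := hF.fderiv
  rw [h0.fderiv_eq, fderiv_fun_const] at hz
  have := congrArg (fun L : (ℝ × ℝ) →L[ℝ] ℂ => L v) hz.symm
  simpa using this

end Helpers

/-- The transverse Gauss law (2-8e) is a consequence of the vectorial and scalar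
Helmholtz equations (2-9a) and (2-9b): the three equations of the waveguide
system are linearly dependent. -/
theorem stmt_14 (Ω : Set (ℝ × ℝ)) (hΩ : IsOpen Ω)
    (es : ℝ × ℝ → ℂ × ℂ) (ez : ℝ × ℝ → ℂ)
    (hes : ContDiffOn ℝ (⊤ : ℕ∞) es Ω) (hez : ContDiffOn ℝ (⊤ : ℕ∞) ez Ω)
    (μzz : ℝ × ℝ → ℂ) (hμzz : ContDiffOn ℝ (⊤ : ℕ∞) μzz Ω) (hμzz0 : ∀ p ∈ Ω, μzz p ≠ 0)
    (ν εcs : ℝ × ℝ → Matrix (Fin 2) (Fin 2) ℂ)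
    (hν : ∀ i j, ContDiffOn ℝ (⊤ : ℕ∞) (fun p => ν p i j) Ω)
    (hεcs : ∀ i j, ContDiffOn ℝ (⊤ : ℕ∞) (fun p => εcs p i j) Ω)
    (εcz : ℝ × ℝ → ℂ) (hεcz : ContDiffOn ℝ (⊤ : ℕ∞) εcz Ω)
    (k₀ kz : ℂ) (hk₀ : k₀ ≠ 0)
    (hi : ∀ p ∈ Ω, vCurl (fun q => (μzz q)⁻¹ * sCurl es q) p
            + (Complex.I * kz) • matVec (ν p) (tgrad ez p)
            - k₀ ^ 2 • matVec (εcs p) (es p)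
            + kz ^ 2 • matVec (ν p) (es p) = 0)
    (hii : ∀ p ∈ Ω, tdiv (fun q => matVec (ν q) (tgrad ez q)) p
            - Complex.I * kz * tdiv (fun q => matVec (ν q) (es q)) p
            + k₀ ^ 2 * εcz p * ez p = 0) :
    ∀ p ∈ Ω,
      tdiv (fun q => matVec (εcs q) (es q)) p + Complex.I * kz * εcz p * ez p = 0 := by
  
  intro p hp
  have nh := hΩ.mem_nhds hp
  have hesA : ContDiffAt ℝ (⊤ : ℕ∞) es p := hes.contDiffAt nh
  have hezA : ContDiffAt ℝ (⊤ : ℕ∞) ez p := hez.contDiffAt nh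
  have hes1 : ContDiffAt ℝ (⊤ : ℕ∞) (fun q => (es q).1) p := hesA.fst
  have hes2 : ContDiffAt ℝ (⊤ : ℕ∞) (fun q => (es q).2) p := hesA.snd
  have hνA : ∀ i j, ContDiffAt ℝ (⊤ : ℕ∞) (fun q => ν q i j) p := fun i j => (hν i j).contDiffAt nh
  have hεA : ∀ i j, ContDiffAt ℝ (⊤ : ℕ∞) (fun q => εcs q i j) p :=
    fun i j => (hεcs i j).contDiffAt nh
  set g : ℝ × ℝ → ℂ := fun q => (μzz q)⁻¹ * sCurl es q with hgdef
  have hgA : ContDiffAt ℝ (⊤ : ℕ∞) g p := by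
    refine ContDiffAt.mul ((hμzz.contDiffAt nh).inv (hμzz0 p hp)) ?_
    show ContDiffAt ℝ (⊤ : ℕ∞)
      (fun q => fderiv ℝ (fun r => (es r).2) q (1, 0)
        - fderiv ℝ (fun r => (es r).1) q (0, 1)) p
    exact (cdA_pdv hes2 (1, 0)).sub (cdA_pdv hes1 (0, 1))
  -- differentiability of all component fields
  have ha1 : DifferentiableAt ℝ (fun q => (vCurl g q).1) p := by
    show DifferentiableAt ℝ (fun q => fderiv ℝ g q (0, 1)) p
    exact (cdA_pdv hgA (0, 1)).differentiableAt (by simp)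
  have ha2 : DifferentiableAt ℝ (fun q => (vCurl g q).2) p := by
    show DifferentiableAt ℝ (fun q => -(fderiv ℝ g q (1, 0))) p
    exact ((cdA_pdv hgA (1, 0)).differentiableAt (by simp)).neg
  have hb1 : DifferentiableAt ℝ (fun q => (matVec (ν q) (tgrad ez q)).1) p := by
    show DifferentiableAt ℝ
      (fun q => ν q 0 0 * fderiv ℝ ez q (1, 0) + ν q 0 1 * fderiv ℝ ez q (0, 1)) p
    exact ((((hνA 0 0).mul (cdA_pdv hezA (1, 0))).add
      ((hνA 0 1).mul (cdA_pdv hezA (0, 1)))).differentiableAt (by simp))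
  have hb2 : DifferentiableAt ℝ (fun q => (matVec (ν q) (tgrad ez q)).2) p := by
    show DifferentiableAt ℝ
      (fun q => ν q 1 0 * fderiv ℝ ez q (1, 0) + ν q 1 1 * fderiv ℝ ez q (0, 1)) p
    exact ((((hνA 1 0).mul (cdA_pdv hezA (1, 0))).add
      ((hνA 1 1).mul (cdA_pdv hezA (0, 1)))).differentiableAt (by simp))
  have hc1 : DifferentiableAt ℝ (fun q => (matVec (εcs q) (es q)).1) p := by
    show DifferentiableAt ℝ (fun q => εcs q 0 0 * (es q).1 + εcs q 0 1 * (es q).2) p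
    exact ((((hεA 0 0).mul hes1).add ((hεA 0 1).mul hes2)).differentiableAt (by simp))
  have hc2 : DifferentiableAt ℝ (fun q => (matVec (εcs q) (es q)).2) p := by
    show DifferentiableAt ℝ (fun q => εcs q 1 0 * (es q).1 + εcs q 1 1 * (es q).2) p
    exact ((((hεA 1 0).mul hes1).add ((hεA 1 1).mul hes2)).differentiableAt (by simp))
  have hd1 : DifferentiableAt ℝ (fun q => (matVec (ν q) (es q)).1) p := by
    show DifferentiableAt ℝ (fun q => ν q 0 0 * (es q).1 + ν q 0 1 * (es q).2) p
    exact ((((hνA 0 0).mul hes1).add ((hνA 0 1).mul hes2)).differentiableAt (by simp))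
  have hd2 : DifferentiableAt ℝ (fun q => (matVec (ν q) (es q)).2) p := by
    show DifferentiableAt ℝ (fun q => ν q 1 0 * (es q).1 + ν q 1 1 * (es q).2) p
    exact ((((hνA 1 0).mul hes1).add ((hνA 1 1).mul hes2)).differentiableAt (by simp))
  -- componentwise forms of the vectorial equation (i)
  have hi1 : ∀ q ∈ Ω, (vCurl g q).1
      + (Complex.I * kz) * (matVec (ν q) (tgrad ez q)).1
      - k₀ ^ 2 * (matVec (εcs q) (es q)).1
      + kz ^ 2 * (matVec (ν q) (es q)).1 = 0 := by
    intro q hq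
    have h := congrArg Prod.fst (hi q hq)
    simpa [smul_eq_mul] using h
  have hi2 : ∀ q ∈ Ω, (vCurl g q).2
      + (Complex.I * kz) * (matVec (ν q) (tgrad ez q)).2
      - k₀ ^ 2 * (matVec (εcs q) (es q)).2
      + kz ^ 2 * (matVec (ν q) (es q)).2 = 0 := by
    intro q hq
    have h := congrArg Prod.snd (hi q hq)
    simpa [smul_eq_mul] using h
  have hA := pdv_comb_zero hΩ hp ha1 hb1 hc1 hd1 hi1 (1, 0)
  have hB := pdv_comb_zero hΩ hp ha2 hb2 hc2 hd2 hi2 (0, 1)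
  -- div Curl = 0
  have hU : fderiv ℝ (fun q => (vCurl g q).1) p (1, 0)
      + fderiv ℝ (fun q => (vCurl g q).2) p (0, 1) = 0 := by
    have h0 : fderiv ℝ (fun q => (vCurl g q).1) p (1, 0)
        = fderiv ℝ (fun q => fderiv ℝ g q (0, 1)) p (1, 0) := rfl
    have h1 : fderiv ℝ (fun q => (vCurl g q).2) p (0, 1)
        = -(fderiv ℝ (fun q => fderiv ℝ g q (1, 0)) p (0, 1)) := by
      have he : (fun q => (vCurl g q).2)
          = fun q => -((fun r => fderiv ℝ g r (1, 0)) q) := rfl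
      rw [he, fderiv_fun_neg]
      simp
    rw [h0, h1, schwarz hgA]
    ring
  have hii' := hii p hp
  simp only [tdiv, pd1, pd2] at hii'
  simp only [tdiv, pd1, pd2]
  have key : k₀ ^ 2 * (fderiv ℝ (fun q => (matVec (εcs q) (es q)).1) p (1, 0)
      + fderiv ℝ (fun q => (matVec (εcs q) (es q)).2) p (0, 1)
      + Complex.I * kz * εcz p * ez p) = 0 := by
    linear_combination hU - hA - hB + (Complex.I * kz) * hii'
      + kz ^ 2 * (fderiv ℝ (fun q => (matVec (ν q) (es q)).1) p (1, 0)
        + fderiv ℝ (fun q => (matVec (ν q) (es q)).2) p (0, 1)) * Complex.I_mul_I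
  have := (mul_eq_zero.mp key).resolve_left (pow_ne_zero 2 hk₀)
  linear_combination this
end
end
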